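/- For all a, b, c, d ∈ A, if a ⪯ w^A(b,c,d) and a is a subterm of none of b, c, d, then a = w^A(b,c,d). -/
import Mathlib


/-- Formal terms built from variables in `V` and a single ternary operation symbol `w`. -/
inductive Term3 (V : Type) : Type
  | var : V → Term3 V
  | w : Term3 V → Term3 V → Term3 V → Term3 V
deriving DecidableEq

/-- Evaluation of a term in an algebra `(B, f)` under a variable assignment `σ`. -/
def Term3.eval {V B : Type} (f : B → B → B → B) (σ : V → B) : Term3 V → B
  | .var v => σ v
  | .w a b c => f (a.eval f σ) (b.eval f σ) (c.eval f σ)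

/-- Renaming/substitution of variables in a term. -/
def Term3.rename {V V' : Type} (ρ : V → V') : Term3 V → Term3 V'
  | .var v => .var (ρ v)
  | .w a b c => .w (a.rename ρ) (b.rename ρ) (c.rename ρ)

/-- A ternary operation `f` satisfies the 3-wnu identities:
`f(x,x,x) = x` and `f(x,x,y) = f(x,y,x) = f(y,x,x)`. -/
def Is3WNU {B : Type} (f : B → B → B → B) : Prop :=
  (∀ x, f x x x = x) ∧ ∀ x y, f x x y = f x y x ∧ f x y x = f y x x

/-- Two terms are equal modulo the equational theory generated by the 3-wnu identities,
i.e. they evaluate equally in every algebra satisfying the 3-wnu identities. -/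
def EqWnu3 {V : Type} (t s : Term3 V) : Prop :=
  ∀ (B : Type) (f : B → B → B → B) (σ : V → B), Is3WNU f → t.eval f σ = s.eval f σ

/-- The set `A` of 3-wnu normal forms (over the countably infinite variable set `ℕ`):
every variable is a normal form, and `w(a₁,a₂,a₃)` is a normal form whenever
`a₁,a₂,a₃` are normal forms with `a₁ ≠ a₂` and `a₁ ≠ a₃`. -/
inductive IsNF3 : Term3 ℕ → Prop
  | var (n : ℕ) : IsNF3 (.var n)
  | w (a b c : Term3 ℕ) : IsNF3 a → IsNF3 b → IsNF3 c → a ≠ b → a ≠ c →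
      IsNF3 (.w a b c)

/-- The normal-form operation `w^A`:
`w^A(a,a,a) = a`; `w^A(a,a,b) = w^A(a,b,a) = w^A(b,a,a) = w(b,a,a)` for `a ≠ b`;
and `w^A(a₁,a₂,a₃) = w(a₁,a₂,a₃)` for pairwise distinct `a₁,a₂,a₃`. -/
def wA3 (a b c : Term3 ℕ) : Term3 ℕ :=
  if a = b then (if b = c then a else .w c a a)
  else if a = c then .w b a a
  else if b = c then .w a b b
  else .w a b c

/-- The subterm relation `⪯` on normal forms: the reflexive transitive closure of
`{(a,b) : a,b ∈ A, ∃ c d e ∈ A, b = w(c,d,e) ∧ a ∈ {c,d,e}}`. -/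
def Sub3 (a b : Term3 ℕ) : Prop :=
  Relation.ReflTransGen
    (fun s t => IsNF3 s ∧ IsNF3 t ∧ ∃ c d e : Term3 ℕ,
      IsNF3 c ∧ IsNF3 d ∧ IsNF3 e ∧ t = .w c d e ∧ (s = c ∨ s = d ∨ s = e)) a b

/-- For all `a, b, c, d ∈ A`, if `a ⪯ w^A(b,c,d)` and `a` is a subterm
of none of `b, c, d`, then `a = w^A(b,c,d)`. -/
theorem statement10 (a b c d : Term3 ℕ)
    (ha : IsNF3 a) (hb : IsNF3 b) (hc : IsNF3 c) (hd : IsNF3 d)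
    (hsub : Sub3 a (wA3 b c d))
    (hnb : ¬ Sub3 a b) (hnc : ¬ Sub3 a c) (hnd : ¬ Sub3 a d) :
    a = wA3 b c d := by
  unfold wA3 at hsub ⊢
  split_ifs at hsub ⊢ with h1 h2 h3 h4 <;>
    first
    | exact absurd hsub hnb
    | · rcases Relation.ReflTransGen.cases_tail hsub with h |
          ⟨m, hm, _, _, c', d', e', _, _, _, heq, hmem⟩
        · exact h.symm
        · exfalso
          injection heq with e1 e2 e3
          subst e1; subst e2; subst e3
          rcases hmem with rfl | rfl | rfl <;>
            first | exact hnb hm | exact hnc hm | exact hnd hm
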